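/- Let E_0 be a complete local ring with maximal ideal 𝔪 containing p, and suppose the p-series of a formal group law F over E_0 satisfies [p](x) = u(x)·P(x) with u(x) invertible and P(x) a distinguished polynomial of degree p^n. Let S be an E_0-algebra in which p is invertible, and let φ : A[p] → S-points be a map such that the divisor Σ_{a∈A[p]} [x(φ(a))] is dominated by the divisor of P(x) in 𝔸^1_S, i.e., the polynomial Π_{a∈A[p]}(T − x(φ(a))) divides P(T) in S[T]. If a ∈ A[p] is nonzero, then x(φ(a)) is invertible in S. -/
import Mathlib


open Polynomial

/-- let `S` be a ring in which `p` is invertible, `P ∈ S[T]` a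
distinguished (monic, degree `p^n`) polynomial with zero constant term and linear
coefficient `u·p` for a unit `u`, `A` a finite abelian `p`-group, and `x : A → S` with
`x 0 = 0` (the coordinates of a map `φ` from `A[p]` to points). If the divisor
`Σ_{a ∈ A[p]} [x(φ(a))]` is dominated by the divisor of `P`, i.e.
`Π_{a ∈ A[p]} (T - x a)` divides `P` in `S[T]`, then `x a` is invertible for every
nonzero `a ∈ A[p]`. -/
theorem stmt18 (p n : ℕ) (hp : p.Prime)
    {A : Type*} [AddCommGroup A] [Fintype A] [DecidableEq A]
    (hA : ∃ m : ℕ, Nat.card A = p ^ m)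
    {S : Type*} [CommRing S] (hpu : IsUnit (p : S))
    (u : S) (hu : IsUnit u) (P : Polynomial S)
    (hmonic : P.Monic) (hdeg : P.natDegree = p ^ n)
    (hP0 : P.coeff 0 = 0) (hP1 : P.coeff 1 = u * p)
    (x : A → S) (hx0 : x 0 = 0)
    (hdvd : (∏ a ∈ Finset.univ.filter (fun a : A => p • a = 0),
        (Polynomial.X - Polynomial.C (x a))) ∣ P) :
    ∀ a : A, p • a = 0 → a ≠ 0 → IsUnit (x a) := by
  set T : Finset A := Finset.univ.filter (fun a : A => p • a = 0) with hT
  have h0T : (0 : A) ∈ T := by simp [hT]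
  -- split off the a = 0 factor
  have hsplit : (∏ a ∈ T, (X - C (x a))) =
      X * ∏ a ∈ T.erase 0, (X - C (x a)) := by
    rw [← Finset.prod_erase_mul T _ h0T, hx0, map_zero, sub_zero, mul_comm]
  obtain ⟨K, hK⟩ := hdvd
  have hcoeff : u * p = (∏ a ∈ T.erase 0, (-(x a))) * K.coeff 0 := by
    have : P.coeff 1 = (X * ((∏ a ∈ T.erase 0, (X - C (x a))) * K)).coeff 1 := by
      rw [hK, hsplit, mul_assoc]
    rw [hP1] at this
    rw [this, Polynomial.coeff_X_mul, Polynomial.mul_coeff_zero]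
    congr 1
    rw [Polynomial.coeff_zero_prod]
    exact Finset.prod_congr rfl (fun a _ => by simp)
  have hunit : IsUnit ((∏ a ∈ T.erase 0, (-(x a))) * K.coeff 0) := by
    rw [← hcoeff]; exact hu.mul hpu
  intro a ha ha0
  have haT : a ∈ T.erase 0 := by simp [hT, ha, ha0]
  have hdvd' : -(x a) ∣ (∏ b ∈ T.erase 0, (-(x b))) * K.coeff 0 :=
    (Finset.dvd_prod_of_mem _ haT).mul_right _
  have := isUnit_of_dvd_unit hdvd' hunit
  simpa using this.neg
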